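/- The family TCS with the cut operations is the free model of the parameterized theory of explicit nondeterminism with cut and scope on generators A: for every model Y (a family Y : ℕ → Type with operations orY, failY, cutY, scopeY, closeY satisfying the listed equations) and every function f : A → Y 0, there exists a unique family of functions h : ∀ n, TCS n → Y n such that h 0 (unstarred [a]) = f a for all a : A, and h is a homomorphism: h n (orT n u v) = orY n (h n u) (h n v); h n (failT n) = failY n; h n (cutT n u) = cutY n (h n u); h (n+1) (closeT n u) = closeY n (h n u); and h n (scopeT n w) = scopeY n (h (n+1) w). -/
import Mathlib


namespace Stmt10

/-- `Idem B = B ⊕ B`: `Sum.inl l` is an unstarred list, `Sum.inr l` a starred one. -/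
abbrev Idem (B : Type) : Type := B ⊕ B

/-- Auxiliary family with `W A (n+1) = Idem (List (W A n))`. -/
abbrev W (A : Type) : ℕ → Type
  | 0 => A
  | n + 1 => Idem (List (W A n))

/-- `TCS A 0 = Idem (List A)` and `TCS A (n+1) = Idem (List (TCS A n))`. -/
abbrev TCS (A : Type) (n : ℕ) : Type := Idem (List (W A n))

/-- Failure is the unstarred empty list. -/
def failT (A : Type) (n : ℕ) : TCS A n := Sum.inl []

/-- `cut` stars a list. -/
def cutT (A : Type) (n : ℕ) : TCS A n → TCS A n
  | Sum.inl xs => Sum.inr xs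
  | Sum.inr xs => Sum.inr xs

/-- Choice is concatenation taking stars into account. -/
def orT (A : Type) (n : ℕ) : TCS A n → TCS A n → TCS A n
  | Sum.inl xs, Sum.inl ys => Sum.inl (xs ++ ys)
  | Sum.inl xs, Sum.inr ys => Sum.inr (xs ++ ys)
  | Sum.inr xs, _ => Sum.inr xs

/-- Closing a scope wraps its continuation as an unstarred singleton list. -/
def closeT (A : Type) (n : ℕ) (x : TCS A n) : TCS A (n + 1) := Sum.inl [x]

/-- Flattening of a list of computations via `orT`. -/
def scopeList (A : Type) (n : ℕ) : List (TCS A n) → TCS A n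
  | [] => failT A n
  | x :: xs => orT A n x (scopeList A n xs)

/-- `scope` erases a star and flattens via `orT`. -/
def scopeT (A : Type) (n : ℕ) : TCS A (n + 1) → TCS A n
  | Sum.inl l => scopeList A n l
  | Sum.inr l => scopeList A n l

section Aux

variable {A : Type} {Y : ℕ → Type}
  (orY : ∀ n, Y n → Y n → Y n) (failY : ∀ n, Y n)
  (cutY : ∀ n, Y n → Y n) (closeY : ∀ n, Y n → Y (n + 1)) (f : A → Y 0)

/-- Fold a list with `orY` and `failY`. -/
def foldOr (n : ℕ) (l : List (Y n)) : Y n := l.foldr (orY n) (failY n)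

/-- Interpretation of elements of `W A n`. -/
def elemI : ∀ n, W A n → Y n
  | 0, a => f a
  | n + 1, Sum.inl l => closeY n (foldOr orY failY n (l.map (elemI n)))
  | n + 1, Sum.inr l => closeY n (cutY n (foldOr orY failY n (l.map (elemI n))))

/-- The candidate homomorphism. -/
def hI (n : ℕ) : TCS A n → Y n
  | Sum.inl l => foldOr orY failY n (l.map (elemI orY failY cutY closeY f n))
  | Sum.inr l => cutY n (foldOr orY failY n (l.map (elemI orY failY cutY closeY f n)))

theorem foldOr_append
    (or_assoc : ∀ n (x y z : Y n), orY n (orY n x y) z = orY n x (orY n y z))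
    (or_fail_left : ∀ n (x : Y n), orY n (failY n) x = x)
    (n : ℕ) (l₁ l₂ : List (Y n)) :
    foldOr orY failY n (l₁ ++ l₂) = orY n (foldOr orY failY n l₁) (foldOr orY failY n l₂) := by
  induction l₁ with
  | nil => simp [foldOr, or_fail_left]
  | cons x xs ih =>
    simp only [List.cons_append, foldOr, List.foldr_cons] at *
    rw [ih, or_assoc]

end Aux

/-- `TCS` is the free model of the parameterized theory of explicit
nondeterminism with `cut` and `scope` on generators `A`. -/
theorem stmt_10 (A : Type) (Y : ℕ → Type)
    (orY : ∀ n, Y n → Y n → Y n) (failY : ∀ n, Y n)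
    (cutY : ∀ n, Y n → Y n)
    (scopeY : ∀ n, Y (n + 1) → Y n)
    (closeY : ∀ n, Y n → Y (n + 1))
    (or_assoc : ∀ n (x y z : Y n), orY n (orY n x y) z = orY n x (orY n y z))
    (or_fail_right : ∀ n (x : Y n), orY n x (failY n) = x)
    (or_fail_left : ∀ n (x : Y n), orY n (failY n) x = x)
    (or_cut_left : ∀ n (x y : Y n), orY n (cutY n x) y = cutY n x)
    (or_cut_right : ∀ n (x y : Y n), orY n x (cutY n y) = cutY n (orY n x y))
    (cut_idem : ∀ n (x : Y n), cutY n (cutY n x) = cutY n x)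
    (scope_fail : ∀ n, scopeY n (failY (n + 1)) = failY n)
    (scope_cut : ∀ n (w : Y (n + 1)), scopeY n (cutY (n + 1) w) = scopeY n w)
    (scope_or_close : ∀ n (x : Y n) (w : Y (n + 1)),
      scopeY n (orY (n + 1) (closeY n x) w) = orY n x (scopeY n w))
    (f : A → Y 0) :
    ∃! h : ∀ n, TCS A n → Y n,
      (∀ a : A, h 0 (Sum.inl [a]) = f a) ∧
      (∀ n (u v : TCS A n), h n (orT A n u v) = orY n (h n u) (h n v)) ∧
      (∀ n, h n (failT A n) = failY n) ∧
      (∀ n (u : TCS A n), h n (cutT A n u) = cutY n (h n u)) ∧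
      (∀ n (u : TCS A n), h (n + 1) (closeT A n u) = closeY n (h n u)) ∧
      (∀ n (w : TCS A (n + 1)), h n (scopeT A n w) = scopeY n (h (n + 1) w)) := by
  set H := hI orY failY cutY closeY f with hH
  set E := elemI orY failY cutY closeY f with hE
  -- basic computation facts
  have hinl : ∀ n (l : List (W A n)), H n (Sum.inl l) = foldOr orY failY n (l.map (E n)) :=
    fun n l => rfl
  have hinr : ∀ n (l : List (W A n)),
      H n (Sum.inr l) = cutY n (foldOr orY failY n (l.map (E n))) := fun n l => rfl
  have hEsucc : ∀ n (w : TCS A n), E (n + 1) w = closeY n (H n w) := by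
    intro n w
    cases w <;> rfl
  -- homomorphism properties of H
  have Hgen : ∀ a : A, H 0 (Sum.inl [a]) = f a := by
    intro a
    show foldOr orY failY 0 [f a] = f a
    simp [foldOr, or_fail_right]
  have Hor : ∀ n (u v : TCS A n), H n (orT A n u v) = orY n (H n u) (H n v) := by
    intro n u v
    cases u with
    | inl l₁ =>
      cases v with
      | inl l₂ =>
        show H n (Sum.inl (l₁ ++ l₂)) = _
        rw [hinl, hinl, hinl, List.map_append, foldOr_append orY failY or_assoc or_fail_left]
      | inr l₂ =>
        show H n (Sum.inr (l₁ ++ l₂)) = _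
        rw [hinr, hinl, hinr, List.map_append, foldOr_append orY failY or_assoc or_fail_left,
          or_cut_right]
    | inr l₁ =>
      show H n (Sum.inr l₁) = _
      rw [hinr, or_cut_left]
  have Hfail : ∀ n, H n (failT A n) = failY n := fun n => rfl
  have Hcut : ∀ n (u : TCS A n), H n (cutT A n u) = cutY n (H n u) := by
    intro n u
    cases u with
    | inl l => rfl
    | inr l =>
      have h1 : H n (cutT A n (Sum.inr l : TCS A n))
          = cutY n (foldOr orY failY n (l.map (E n))) := hinr n l
      rw [h1, hinr, cut_idem]
  have hsingle : ∀ n (w : W A n), H n (Sum.inl [w]) = E n w := by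
    intro n w
    rw [hinl]
    simp [foldOr, or_fail_right]
  have Hclose : ∀ n (u : TCS A n), H (n + 1) (closeT A n u) = closeY n (H n u) := by
    intro n u
    show foldOr orY failY (n + 1) [E (n + 1) u] = _
    simp [foldOr, or_fail_right, hEsucc]
  have HscopeList : ∀ n (l : List (TCS A n)),
      H n (scopeList A n l) = scopeY n (foldOr orY failY (n + 1) (l.map (E (n + 1)))) := by
    intro n l
    induction l with
    | nil =>
      show H n (failT A n) = scopeY n (failY (n + 1))
      rw [Hfail, scope_fail]
    | cons x xs ih =>
      show H n (orT A n x (scopeList A n xs)) = _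
      rw [Hor, ih, List.map_cons]
      show _ = scopeY n (orY (n + 1) (E (n + 1) x) (foldOr orY failY (n + 1) (xs.map (E (n + 1)))))
      rw [hEsucc, scope_or_close]
  have Hscope : ∀ n (w : TCS A (n + 1)), H n (scopeT A n w) = scopeY n (H (n + 1) w) := by
    intro n w
    cases w with
    | inl l =>
      show H n (scopeList A n l) = _
      rw [HscopeList, hinl]
    | inr l =>
      show H n (scopeList A n l) = _
      rw [HscopeList, hinr, scope_cut]
  refine ⟨H, ⟨Hgen, Hor, Hfail, Hcut, Hclose, Hscope⟩, ?_⟩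
  -- uniqueness
  rintro h' ⟨h'gen, h'or, h'fail, h'cut, h'close, h'scope⟩
  have key : ∀ n (x : TCS A n), h' n x = H n x := by
    intro n
    induction n with
    | zero =>
      have sing : ∀ w : W A 0, h' 0 (Sum.inl [w]) = E 0 w := h'gen
      have inlcase : ∀ l : List (W A 0), h' 0 (Sum.inl l) = H 0 (Sum.inl l) := by
        intro l
        induction l with
        | nil => exact (h'fail 0).trans (Hfail 0).symm
        | cons x xs ih =>
          have : (Sum.inl (x :: xs) : TCS A 0) = orT A 0 (Sum.inl [x]) (Sum.inl xs) := rfl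
          rw [this, h'or, Hor, ih, sing, hsingle]
      intro x
      cases x with
      | inl l => exact inlcase l
      | inr l =>
        have : (Sum.inr l : TCS A 0) = cutT A 0 (Sum.inl l) := rfl
        rw [this, h'cut, Hcut, inlcase]
    | succ n ihn =>
      have sing : ∀ w : W A (n + 1), h' (n + 1) (Sum.inl [w]) = E (n + 1) w := by
        intro w
        have : (Sum.inl [w] : TCS A (n + 1)) = closeT A n w := rfl
        rw [this, h'close, ihn, hEsucc]
      have inlcase : ∀ l : List (W A (n + 1)),
          h' (n + 1) (Sum.inl l) = H (n + 1) (Sum.inl l) := by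
        intro l
        induction l with
        | nil => exact (h'fail (n + 1)).trans (Hfail (n + 1)).symm
        | cons x xs ih =>
          have : (Sum.inl (x :: xs) : TCS A (n + 1)) = orT A (n + 1) (Sum.inl [x]) (Sum.inl xs) :=
            rfl
          rw [this, h'or, Hor, ih, sing, hsingle]
      intro x
      cases x with
      | inl l => exact inlcase l
      | inr l =>
        have : (Sum.inr l : TCS A (n + 1)) = cutT A (n + 1) (Sum.inl l) := rfl
        rw [this, h'cut, Hcut, inlcase]
  funext n x
  exact key n x

end Stmt10
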